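/- Let g(x) = x + max(x − 1, 0), and let A and B be the 2×2 real positive semidefinite matrices A = [[9/10, 0], [0, 6/10]] and B = [[8/10, 1/2], [1/2, 4/10]]. Then the operator norm of g(A) − g(B) is strictly smaller than the operator norm of g(|A − B|), where |M| = (M*M)^{1/2}. In particular, the inequality ‖g(A) − g(B)‖ ≥ ‖g(|A − B|)‖ fails for this non-negative convex function g with g(0) = 0. -/

import Mathlib

open Matrix
open scoped ComplexOrder

/-- The eigenvalues of a square matrix, sorted in non-increasing order
(junk value `0` if the matrix is not Hermitian). -/
noncomputable def eigValsDown {𝕜 : Type*} [RCLike 𝕜] {n : ℕ}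
    (A : Matrix (Fin n) (Fin n) 𝕜) : Fin n → ℝ :=
  if hA : A.IsHermitian then
    fun k => (hA.eigenvalues ∘ Tuple.sort hA.eigenvalues) k.rev
  else 0

/-- Functional calculus: apply a real function to a Hermitian matrix via its spectral
decomposition (junk value `0` if the matrix is not Hermitian). -/
noncomputable def matFun {𝕜 : Type*} [RCLike 𝕜] {n : ℕ} (h : ℝ → ℝ)
    (A : Matrix (Fin n) (Fin n) 𝕜) : Matrix (Fin n) (Fin n) 𝕜 :=
  if hA : A.IsHermitian then
    (hA.eigenvectorUnitary : Matrix (Fin n) (Fin n) 𝕜) *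
      Matrix.diagonal (fun i => (h (hA.eigenvalues i) : 𝕜)) *
      star (hA.eigenvectorUnitary : Matrix (Fin n) (Fin n) 𝕜)
  else 0

/-- The operator norm (largest singular value) of a matrix. -/
noncomputable def opNorm {𝕜 : Type*} [RCLike 𝕜] {n : ℕ}
    (A : Matrix (Fin n) (Fin n) 𝕜) : ℝ :=
  ‖Matrix.toEuclideanCLM (𝕜 := 𝕜) A‖

/-- The matrix absolute value `|M| = (Mᴴ M)^(1/2)`. -/
noncomputable def matAbs {𝕜 : Type*} [RCLike 𝕜] {n : ℕ}
    (A : Matrix (Fin n) (Fin n) 𝕜) : Matrix (Fin n) (Fin n) 𝕜 :=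
  ((Matrix.posSemidef_conjTranspose_mul_self A).1.eigenvectorUnitary : Matrix (Fin n) (Fin n) 𝕜) *
    Matrix.diagonal ((↑) ∘ Real.sqrt ∘ (Matrix.posSemidef_conjTranspose_mul_self A).1.eigenvalues) *
    (star (Matrix.posSemidef_conjTranspose_mul_self A).1.eigenvectorUnitary : Matrix (Fin n) (Fin n) 𝕜)

/-- The Ky Fan `k`-norm: the sum of the `k` largest singular values. -/
noncomputable def kyFanNorm {𝕜 : Type*} [RCLike 𝕜] {n : ℕ} (k : ℕ)
    (A : Matrix (Fin n) (Fin n) 𝕜) : ℝ :=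
  ∑ j ∈ Finset.univ.filter (fun j : Fin n => (j : ℕ) < k), eigValsDown (matAbs A) j

/-!
The function `g x = x + max (x - 1) 0` is the identity on `(-∞, 1]`. Since `‖A‖ ≤ 1` and
`‖A - B‖ ≤ 1`, we get `g(A) = A` and `g(|A - B|) = |A - B|`, and the C*-identity gives
`‖|A - B|‖ = ‖A - B‖`. Only `B` has an eigenvalue above `1`; on its two-point spectrum `g` agrees
with an affine function, so `g(B) = (1 + k) B - k λ₋ I` for explicit `k`, `λ₋`. Both sides are then
norms of real symmetric `2 × 2` matrices, given in closed form by
`‖[[p, q], [q, r]]‖ = (|p + r| + √((p - r)² + 4 q²)) / 2`, and the comparison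
`0.6501… < 0.6524…` is numerical.
-/

open scoped Matrix.Norms.L2Operator
open scoped MatrixOrder

section

variable {𝕜 : Type*} [RCLike 𝕜] {n : ℕ}

lemma opNorm_eq_l2_opNorm (A : Matrix (Fin n) (Fin n) 𝕜) : opNorm A = ‖A‖ := rfl

lemma Matrix.IsHermitian.matFun_eq_cfc {A : Matrix (Fin n) (Fin n) 𝕜} (hA : A.IsHermitian)
    (h : ℝ → ℝ) : matFun h A = cfc h A := by
  rw [hA.cfc_eq, Matrix.IsHermitian.cfc, Unitary.conjStarAlgAut_apply, matFun, dif_pos hA]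
  rfl

lemma matAbs_eq_sqrt (M : Matrix (Fin n) (Fin n) 𝕜) : matAbs M = CFC.sqrt (Mᴴ * M) := by
  have hM := Matrix.posSemidef_conjTranspose_mul_self M
  rw [CFC.sqrt_eq_real_sqrt _ hM.nonneg, cfcₙ_eq_cfc (hf0 := by simp), hM.1.cfc_eq,
    Matrix.IsHermitian.cfc, Unitary.conjStarAlgAut_apply]
  rfl

lemma isHermitian_matAbs (M : Matrix (Fin n) (Fin n) 𝕜) : (matAbs M).IsHermitian := by
  rw [matAbs_eq_sqrt]
  exact (CFC.sqrt_nonneg _).isSelfAdjoint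

lemma l2_opNorm_matAbs (M : Matrix (Fin n) (Fin n) 𝕜) : ‖matAbs M‖ = ‖M‖ := by
  have hM := Matrix.posSemidef_conjTranspose_mul_self M
  have hsq : ‖matAbs M‖ ^ 2 = ‖M‖ ^ 2 := by
    rw [← (isHermitian_matAbs M).isSelfAdjoint.norm_mul_self, matAbs_eq_sqrt,
      CFC.sqrt_mul_sqrt_self _ hM.nonneg, Matrix.l2_opNorm_conjTranspose_mul_self, sq]
  exact (pow_left_inj₀ (norm_nonneg _) (norm_nonneg _) two_ne_zero).mp hsq

lemma Matrix.IsHermitian.l2_opNorm_eq {A : Matrix (Fin n) (Fin n) 𝕜} (hA : A.IsHermitian) :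
    ‖A‖ = ‖hA.eigenvalues‖ := by
  conv_lhs => rw [hA.spectral_theorem, Unitary.conjStarAlgAut_apply]
  rw [CStarRing.norm_mul_mem_unitary _ (Unitary.star_mem hA.eigenvectorUnitary.2),
    CStarRing.norm_coe_unitary_mul, Matrix.l2_opNorm_diagonal]
  simp [Pi.norm_def]

lemma Matrix.IsHermitian.abs_le_l2_opNorm_of_mem_spectrum {A : Matrix (Fin n) (Fin n) 𝕜}
    (hA : A.IsHermitian) {x : ℝ} (hx : x ∈ spectrum ℝ A) : |x| ≤ ‖A‖ := by
  rw [hA.spectrum_real_eq_range_eigenvalues] at hx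
  obtain ⟨i, rfl⟩ := hx
  rw [hA.l2_opNorm_eq]
  exact norm_le_pi_norm hA.eigenvalues i

lemma Matrix.IsHermitian.matFun_eq_self {A : Matrix (Fin n) (Fin n) 𝕜} (hA : A.IsHermitian)
    {h : ℝ → ℝ} (hh : ∀ x, |x| ≤ ‖A‖ → h x = x) : matFun h A = A := by
  rw [hA.matFun_eq_cfc]
  exact (cfc_congr fun x hx => hh x (hA.abs_le_l2_opNorm_of_mem_spectrum hx)).trans (cfc_id ℝ A)

lemma Matrix.IsHermitian.matFun_eq_affine {A : Matrix (Fin n) (Fin n) 𝕜}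
    (hA : A.IsHermitian) {h : ℝ → ℝ} {a b : ℝ} (hh : ∀ x ∈ spectrum ℝ A, h x = a * x + b) :
    matFun h A = a • A + b • 1 := by
  rw [hA.matFun_eq_cfc, cfc_congr hh, cfc_add .., cfc_const_mul .., cfc_id' .., cfc_const ..,
    Algebra.algebraMap_eq_smul_one]

end

lemma norm_fin_two (v : Fin 2 → ℝ) : ‖v‖ = (|v 0 + v 1| + |v 0 - v 1|) / 2 := by
  refine le_antisymm ((pi_norm_le_iff_of_nonneg (by positivity)).mpr fun i => ?_) ?_
  · rw [Real.norm_eq_abs, abs_le]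
    fin_cases i <;> dsimp <;> constructor <;>
      linarith [le_abs_self (v 0 + v 1), neg_abs_le (v 0 + v 1),
        le_abs_self (v 0 - v 1), neg_abs_le (v 0 - v 1)]
  · have h0 := abs_le.mp ((Real.norm_eq_abs _).symm.trans_le (norm_le_pi_norm v 0))
    have h1 := abs_le.mp ((Real.norm_eq_abs _).symm.trans_le (norm_le_pi_norm v 1))
    cases abs_cases (v 0 + v 1) <;> cases abs_cases (v 0 - v 1) <;> linarith

lemma isHermitian_symm_fin_two (p q r : ℝ) : (!![p, q; q, r]).IsHermitian := by
  ext i j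
  fin_cases i <;> fin_cases j <;> rfl

lemma Matrix.IsHermitian.eigenvalues_fin_two {A : Matrix (Fin 2) (Fin 2) ℝ} (hA : A.IsHermitian) :
    hA.eigenvalues 0 + hA.eigenvalues 1 = A.trace ∧
      hA.eigenvalues 0 * hA.eigenvalues 1 = A.det := by
  constructor
  · simpa [Fin.sum_univ_two] using hA.trace_eq_sum_eigenvalues.symm
  · simpa [Fin.prod_univ_two] using hA.det_eq_prod_eigenvalues.symm

lemma Matrix.IsHermitian.sq_sub_trace_mul_add_det_of_mem_spectrum
    {A : Matrix (Fin 2) (Fin 2) ℝ} (hA : A.IsHermitian) {x : ℝ} (hx : x ∈ spectrum ℝ A) :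
    x ^ 2 - A.trace * x + A.det = 0 := by
  obtain ⟨htr, hdet⟩ := hA.eigenvalues_fin_two
  rw [hA.spectrum_real_eq_range_eigenvalues] at hx
  obtain ⟨i, rfl⟩ := hx
  rw [← htr, ← hdet]
  fin_cases i <;> simp only [Fin.zero_eta, Fin.mk_one] <;> ring

lemma l2_opNorm_symm_fin_two (p q r : ℝ) :
    ‖!![p, q; q, r]‖ = (|p + r| + √((p - r) ^ 2 + 4 * q ^ 2)) / 2 := by
  have hA := isHermitian_symm_fin_two p q r
  obtain ⟨htr, hdet⟩ := hA.eigenvalues_fin_two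
  rw [Matrix.trace_fin_two_of] at htr
  rw [Matrix.det_fin_two_of] at hdet
  have hdiff : √((p - r) ^ 2 + 4 * q ^ 2) = |hA.eigenvalues 0 - hA.eigenvalues 1| := by
    rw [← Real.sqrt_sq_eq_abs]
    congr 1
    linear_combination (-(hA.eigenvalues 0 + hA.eigenvalues 1 + p + r)) * htr + 4 * hdet
  rw [hA.l2_opNorm_eq, norm_fin_two, hdiff, htr]

local notation "𝔸" => !![(9:ℝ)/10, 0; 0, 6/10]
local notation "𝔹" => !![(8:ℝ)/10, 1/2; 1/2, 4/10]

lemma matFun_hinge_eq_self {𝕜 : Type*} [RCLike 𝕜] {n : ℕ} {A : Matrix (Fin n) (Fin n) 𝕜}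
    (hA : A.IsHermitian) (hA1 : ‖A‖ ≤ 1) : matFun (fun x => x + max (x - 1) 0) A = A :=
  hA.matFun_eq_self fun x hx => by
    rw [max_eq_right (by linarith [le_abs_self x]), add_zero]

/- The eigenvalues of `𝔹` are `3/5 ± s/2`; the affine function through `(λ₋, λ₋)` and
`(λ₊, 2 λ₊ - 1)` has slope `1 + k` with `k = (λ₊ - 1) / s`. -/
lemma matFun_hinge_B {s k : ℝ} (hs : s ^ 2 = 29 / 25) (hs0 : 0 < s) (hk : 2 * s * k = s - 4 / 5) :
    matFun (fun x => x + max (x - 1) 0) 𝔹 = (1 + k) • 𝔹 + (-k * (3/5 - s/2)) • 1 := by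
  refine (isHermitian_symm_fin_two _ _ _).matFun_eq_affine fun x hx => ?_
  have hq := (isHermitian_symm_fin_two _ _ _).sq_sub_trace_mul_add_det_of_mem_spectrum hx
  rw [Matrix.trace_fin_two_of, Matrix.det_fin_two_of] at hq
  have hroots : (x - (3/5 + s/2)) * (x - (3/5 - s/2)) = 0 := by
    linear_combination hq - (1/4 : ℝ) * hs
  rcases mul_eq_zero.mp hroots with h | h
  · rw [max_eq_left (by nlinarith)]
    linear_combination (1 - k) * h - hk / 2
  · rw [max_eq_right (by nlinarith)]
    linear_combination -k * h

lemma l2_opNorm_A_le_one : ‖𝔸‖ ≤ 1 := by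
  have h : √((9/10 - 6/10) ^ 2 + 4 * 0 ^ 2 : ℝ) ≤ 1/2 := by
    rw [Real.sqrt_le_left (by norm_num)]; norm_num
  rw [l2_opNorm_symm_fin_two, abs_of_pos (by norm_num)]
  linarith

lemma l2_opNorm_A_sub_B : ‖𝔸 - 𝔹‖ = (3/10 + √(101/100)) / 2 := by
  have h : 𝔸 - 𝔹 = !![1/10, -1/2; -1/2, 1/5] := by
    ext i j; fin_cases i <;> fin_cases j <;> norm_num
  rw [h, l2_opNorm_symm_fin_two]
  norm_num

lemma l2_opNorm_A_sub_B_le_one : ‖𝔸 - 𝔹‖ ≤ 1 := by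
  have h : √(101/100) ≤ (17/10 : ℝ) := by
    rw [Real.sqrt_le_left (by norm_num)]; norm_num
  rw [l2_opNorm_A_sub_B]
  linarith

lemma l2_opNorm_A_sub_hinge_B {s k : ℝ} (hk : 2 * s * k = s - 4 / 5) :
    ‖𝔸 - ((1 + k) • 𝔹 + (-k * (3/5 - s/2)) • 1)‖ =
      (|7/10 - s/2| + √((1/10 + 2/5 * k) ^ 2 + (1 + k) ^ 2)) / 2 := by
  have h : 𝔸 - ((1 + k) • 𝔹 + (-k * (3/5 - s/2)) • 1) =
      !![9/10 - (1 + k) * (4/5) + k * (3/5 - s/2), -(1 + k)/2;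
        -(1 + k)/2, 3/5 - (1 + k) * (2/5) + k * (3/5 - s/2)] := by
    ext i j
    fin_cases i <;> fin_cases j <;>
      simp only [Fin.zero_eta, Fin.mk_one, Matrix.sub_apply, Matrix.add_apply, Matrix.smul_apply,
        Matrix.one_apply_eq, Matrix.one_apply_ne, of_apply, cons_val', cons_val_zero, cons_val_one,
        cons_val_fin_one, smul_eq_mul, ne_eq, zero_ne_one, one_ne_zero, not_false_eq_true] <;>
      ring
  rw [h, l2_opNorm_symm_fin_two]
  congr 3
  · linear_combination -hk / 2
  · ring

lemma hinge_gap {s k : ℝ} (hs : s ^ 2 = 29 / 25) (hs0 : 0 < s) (hk : 2 * s * k = s - 4 / 5) :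
    |7/10 - s/2| + √((1/10 + 2/5 * k) ^ 2 + (1 + k) ^ 2) < 3/10 + √(101/100) := by
  have hs_lo : 1.077 ≤ s := by nlinarith
  have hs_hi : s ≤ 1.0771 := by nlinarith
  have hk_lo : 0.1285 ≤ k := by nlinarith
  have hk_hi : k ≤ 0.12864 := by nlinarith
  have h1 : |7/10 - s/2| ≤ 0.1615 := by
    rw [abs_le]; constructor <;> linarith
  have h2 : √((1/10 + 2/5 * k) ^ 2 + (1 + k) ^ 2) ≤ 1.1389 := by
    rw [Real.sqrt_le_left (by norm_num)]; nlinarith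
  have h3 : 1.0049 ≤ √(101/100) := by
    rw [Real.le_sqrt (by norm_num) (by norm_num)]; norm_num
  linarith

/-- counterexample to Question 1, with `g(x) = x + (x-1)⁺` and the concrete
`2×2` PSD matrices `A = [[9/10,0],[0,6/10]]`, `B = [[8/10,1/2],[1/2,4/10]]`:
`‖g(A) - g(B)‖ < ‖g(|A - B|)‖` in operator norm. -/
theorem stmt3 :
    opNorm (matFun (fun x => x + max (x - 1) 0) !![(9:ℝ)/10, 0; 0, 6/10] -
        matFun (fun x => x + max (x - 1) 0) !![(8:ℝ)/10, 1/2; 1/2, 4/10]) <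
      opNorm (matFun (fun x => x + max (x - 1) 0)
        (matAbs (!![(9:ℝ)/10, 0; 0, 6/10] - !![(8:ℝ)/10, 1/2; 1/2, 4/10]))) := by
  obtain ⟨s, hs, hs0⟩ : ∃ s : ℝ, s ^ 2 = 29 / 25 ∧ 0 < s :=
    ⟨√(29/25), Real.sq_sqrt (by norm_num), by positivity⟩
  obtain ⟨k, hk⟩ : ∃ k, 2 * s * k = s - 4 / 5 := ⟨(s - 4/5) / (2 * s), by field_simp⟩
  rw [opNorm_eq_l2_opNorm, opNorm_eq_l2_opNorm, matFun_hinge_B hs hs0 hk,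
    matFun_hinge_eq_self (isHermitian_symm_fin_two _ _ _) l2_opNorm_A_le_one,
    matFun_hinge_eq_self (isHermitian_matAbs _) (by rw [l2_opNorm_matAbs]; exact l2_opNorm_A_sub_B_le_one), l2_opNorm_matAbs,
    l2_opNorm_A_sub_hinge_B hk, l2_opNorm_A_sub_B]
  linarith [hinge_gap hs hs0 hk]
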